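/- arXiv:1309.1693 — 2 statements merged into one kernel-verified Lean document; each statement's English description precedes it below -/
import Mathlib

section
/- Let (E_i)_{i∈ℕ} be Banach spaces with a projective system of continuous linear transition maps φ_{ji} : E_j → E_i for i ≤ j (φ_{ii} = id, φ_{ji} ∘ φ_{kj} = φ_{ki} for i ≤ j ≤ k), and let limE ⊆ Π_{i∈ℕ} E_i denote the inverse limit. Suppose for each i we have a vector field X_i : E_i → E_i such that: (a) every X_i is Lipschitz with a common constant μ > 0; (b) there is M > 0 with ‖X_i(z)‖ ≤ M for all i and all z ∈ E_i; and (c) φ_{ji} ∘ X_j = X_i ∘ φ_{ji} for all i ≤ j. Then, with ε := 1/(M+μ), for every y = (y_i) ∈ limE there exist curves x_i : [-ε, ε] → E_i, unique among differentiable curves, such that x_i(0) = y_i and x_i'(t) = X_i(x_i(t)) for all t ∈ [-ε, ε] and all i; moreover (x_i(t))_{i∈ℕ} ∈ limE for every t ∈ [-ε, ε]. -/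
open Set

/-!
Since the vector fields are globally Lipschitz and bounded, Picard–Lindelöf gives in each `E i`
an integral curve `x i` through `y i` on the whole interval `[-ε, ε]`, and Lipschitz continuity
makes it unique. Compatibility of the `X i` with the transition maps means that `φ i j ∘ x j` is
an integral curve of `X i` through `φ i j (y j) = y i`, so by uniqueness it equals `x i`: the
curves stay in the inverse limit.
-/

section

variable {E F : Type*} [NormedAddCommGroup E] [NormedSpace ℝ E]
  [NormedAddCommGroup F] [NormedSpace ℝ F]

theorem LipschitzWith.exists_eq_forall_mem_Icc_hasDerivWithinAt [CompleteSpace E]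
    {X : E → E} {K : NNReal} {L : ℝ} (hX : LipschitzWith K X) (hL : ∀ z, ‖X z‖ ≤ L)
    {a b t₀ : ℝ} (ht₀ : t₀ ∈ Icc a b) (x₀ : E) :
    ∃ f : ℝ → E, f t₀ = x₀ ∧ ∀ t ∈ Icc a b, HasDerivWithinAt f (X (f t)) (Icc a b) t := by
  have hL₀ : 0 ≤ L := (norm_nonneg _).trans (hL 0)
  have hT₀ : 0 ≤ max (b - t₀) (t₀ - a) := le_max_of_le_left (sub_nonneg.2 ht₀.2)
  -- The bound holds on all of `E`, so the ball can be chosen large enough for the whole interval.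
  have hPL : IsPicardLindelof (fun _ ↦ X) ⟨t₀, ht₀⟩ x₀
      (L * max (b - t₀) (t₀ - a)).toNNReal 0 L.toNNReal K :=
    .of_time_independent (fun z _ ↦ (hL z).trans (Real.le_coe_toNNReal L)) hX.lipschitzOnWith
      (by simp [Real.coe_toNNReal _ hL₀, Real.coe_toNNReal _ (mul_nonneg hL₀ hT₀)])
  exact hPL.exists_eq_forall_mem_Icc_hasDerivWithinAt₀

theorem LipschitzWith.eqOn_Icc_of_hasDerivWithinAt {X : E → E} {K : NNReal}
    (hX : LipschitzWith K X) {a b t₀ : ℝ} (ht₀ : t₀ ∈ Ioo a b) {f g : ℝ → E}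
    (hf : ∀ t ∈ Icc a b, HasDerivWithinAt f (X (f t)) (Icc a b) t)
    (hg : ∀ t ∈ Icc a b, HasDerivWithinAt g (X (g t)) (Icc a b) t) (h₀ : f t₀ = g t₀) :
    EqOn f g (Icc a b) := by
  have hderiv {u : ℝ → E} (hu : ∀ t ∈ Icc a b, HasDerivWithinAt u (X (u t)) (Icc a b) t)
      (t : ℝ) (ht : t ∈ Ioo a b) : HasDerivAt u (X (u t)) t :=
    (hu t (Ioo_subset_Icc_self ht)).hasDerivAt (Icc_mem_nhds ht.1 ht.2)
  exact ODE_solution_unique_of_mem_Icc (v := fun _ ↦ X) (s := fun _ ↦ univ)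
    (fun _ _ ↦ hX.lipschitzOnWith) ht₀
    (fun t ht ↦ (hf t ht).continuousWithinAt) (hderiv hf) (fun _ _ ↦ mem_univ _)
    (fun t ht ↦ (hg t ht).continuousWithinAt) (hderiv hg) (fun _ _ ↦ mem_univ _) h₀

theorem ContinuousLinearMap.hasDerivWithinAt_comp_of_semiconj (φ : F →L[ℝ] E) {X : E → E}
    {Y : F → F} (hφ : ∀ z, φ (Y z) = X (φ z)) {f : ℝ → F} {s : Set ℝ} {t : ℝ}
    (hf : HasDerivWithinAt f (Y (f t)) s t) :
    HasDerivWithinAt (fun t ↦ φ (f t)) (X (φ (f t))) s t := by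
  simpa only [hφ, Function.comp_def] using φ.hasFDerivAt.comp_hasDerivWithinAt t hf

end

theorem flow_of_projective_lipschitz_bounded_vector_field_general
    (E : ℕ → Type*) [∀ i, NormedAddCommGroup (E i)] [∀ i, NormedSpace ℝ (E i)]
    [∀ i, CompleteSpace (E i)]
    (φ : ∀ i j : ℕ, i ≤ j → E j →L[ℝ] E i)
    (X : ∀ i, E i → E i)
    (μ : NNReal)
    (hLip : ∀ i, LipschitzWith μ (X i))
    (M : ℝ) (hM : 0 < M)
    (hbound : ∀ i (z : E i), ‖X i z‖ ≤ M)
    (hcompat : ∀ i j (hij : i ≤ j) (z : E j), φ i j hij (X j z) = X i (φ i j hij z))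
    (y : ∀ i, E i) (hy : ∀ i j (hij : i ≤ j), φ i j hij (y j) = y i)
    (ε : ℝ) (hε : ε = 1 / (M + (μ : ℝ))) :
    ∃ x : ∀ i, ℝ → E i,
      (∀ i, x i 0 = y i) ∧
      (∀ i, ∀ t ∈ Icc (-ε) ε, HasDerivWithinAt (x i) (X i (x i t)) (Icc (-ε) ε) t) ∧
      (∀ t ∈ Icc (-ε) ε, ∀ i j (hij : i ≤ j), φ i j hij (x j t) = x i t) ∧
      (∀ z : ∀ i, ℝ → E i,
        (∀ i, z i 0 = y i) →
        (∀ i, ∀ t ∈ Icc (-ε) ε, HasDerivWithinAt (z i) (X i (z i t)) (Icc (-ε) ε) t) →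
        ∀ i, ∀ t ∈ Icc (-ε) ε, z i t = x i t) := by
  have hε₀ : 0 < ε := by rw [hε]; positivity
  have h₀ : (0 : ℝ) ∈ Ioo (-ε) ε := ⟨neg_neg_iff_pos.2 hε₀, hε₀⟩
  choose x hx₀ hx using fun i ↦
    (hLip i).exists_eq_forall_mem_Icc_hasDerivWithinAt (hbound i) (Ioo_subset_Icc_self h₀) (y i)
  refine ⟨x, hx₀, hx, fun t ht i j hij ↦ ?_, fun z hz₀ hz i ↦ ?_⟩
  · refine (hLip i).eqOn_Icc_of_hasDerivWithinAt h₀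
      (fun t ht ↦ (φ i j hij).hasDerivWithinAt_comp_of_semiconj (hcompat i j hij) (hx j t ht))
      (hx i) ?_ ht
    rw [hx₀, hx₀, hy]
  · exact (hLip i).eqOn_Icc_of_hasDerivWithinAt h₀ (hz i) (hx i) (by rw [hz₀, hx₀])

/-- Flows of projective `μ`-Lipschitz bounded vector fields on PLB spaces:
given a projective system of Banach spaces `(E i, φ)` and vector fields `X i`
that are uniformly `μ`-Lipschitz, uniformly bounded by `M`, and compatible with
the transition maps, through every point `y` of the inverse limit there is a
unique system of integral curves on `[-ε, ε]`, `ε = 1/(M+μ)`, and these curves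
stay in the inverse limit. -/
theorem flow_of_projective_lipschitz_bounded_vector_field
    (E : ℕ → Type*) [∀ i, NormedAddCommGroup (E i)] [∀ i, NormedSpace ℝ (E i)]
    [∀ i, CompleteSpace (E i)]
    (φ : ∀ i j : ℕ, i ≤ j → E j →L[ℝ] E i)
    (hφid : ∀ i (x : E i), φ i i le_rfl x = x)
    (hφcomp : ∀ i j k (hij : i ≤ j) (hjk : j ≤ k) (x : E k),
      φ i j hij (φ j k hjk x) = φ i k (hij.trans hjk) x)
    (X : ∀ i, E i → E i)
    (μ : NNReal) (hμ : 0 < μ)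
    (hLip : ∀ i, LipschitzWith μ (X i))
    (M : ℝ) (hM : 0 < M)
    (hbound : ∀ i (z : E i), ‖X i z‖ ≤ M)
    (hcompat : ∀ i j (hij : i ≤ j) (z : E j), φ i j hij (X j z) = X i (φ i j hij z))
    (y : ∀ i, E i) (hy : ∀ i j (hij : i ≤ j), φ i j hij (y j) = y i)
    (ε : ℝ) (hε : ε = 1 / (M + (μ : ℝ))) :
    ∃ x : ∀ i, ℝ → E i,
      (∀ i, x i 0 = y i) ∧
      (∀ i, ∀ t ∈ Icc (-ε) ε, HasDerivWithinAt (x i) (X i (x i t)) (Icc (-ε) ε) t) ∧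
      (∀ t ∈ Icc (-ε) ε, ∀ i j (hij : i ≤ j), φ i j hij (x j t) = x i t) ∧
      (∀ z : ∀ i, ℝ → E i,
        (∀ i, z i 0 = y i) →
        (∀ i, ∀ t ∈ Icc (-ε) ε, HasDerivWithinAt (z i) (X i (z i t)) (Icc (-ε) ε) t) →
        ∀ i, ∀ t ∈ Icc (-ε) ε, z i t = x i t) :=
  flow_of_projective_lipschitz_bounded_vector_field_general E φ X μ hLip M hM hbound hcompat y hy ε
    hε
end

section
/- Let (E_i)_{i∈ℕ} be Banach spaces with a projective system of continuous linear transition maps φ_{ji} : E_j → E_i for i ≤ j, and let limE ⊆ Π_{i∈ℕ} E_i denote the inverse limit. Let μ > 0 and let φ_i : ℝ × E_i → E_i be continuous maps such that each x ↦ φ_i(t, x) is μ-Lipschitz for every t ∈ ℝ, and suppose the family is compatible: φ_{ji}(φ_j(t, x)) = φ_i(t, φ_{ji}(x)) for all i ≤ j, t ∈ ℝ, x ∈ E_j. Let (t₀, x₀) ∈ ℝ × limE and τ > 0 be such that M₁ := sup { ‖φ_i(t, (x₀)_i)‖ : i ∈ ℕ, t ∈ [t₀ − τ, t₀ + τ]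 } < +∞. Then, with a := min(τ, 1/(M₁ + μ)), there exist curves x_i : [t₀ − a, t₀ + a] → E_i, unique among differentiable curves, such that x_i(t₀) = (x₀)_i and x_i'(t) = φ_i(t, x_i(t)) for all t ∈ [t₀ − a, t₀ + a] and all i; moreover (x_i(t))_{i∈ℕ} ∈ limE for every t ∈ [t₀ − a, t₀ + a]. -/
open Set Metric Function NNReal

/-!
Each component equation `x' = f i t x` is an ordinary Lipschitz ODE on a Banach space. On
`[t₀ - a, t₀ + a]` the field stays bounded by `M₁ + μ` on the unit ball around `x₀ i`, and
`(M₁ + μ) a ≤ 1`, so Picard–Lindelöf gives a solution `x i` staying in that ball, and Lipschitz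
uniqueness makes it the only one. A transition map sends solutions for `f j` to solutions for
`f i` because it intertwines the fields, so `φ i j (x j ·)` and `x i` solve the same initial
value problem and therefore coincide: the solution curve lies in the inverse limit.
-/

section LipschitzODE

variable {E : Type*} [NormedAddCommGroup E] [NormedSpace ℝ E]

theorem exists_hasDerivWithinAt_Icc_of_lipschitzWith [CompleteSpace E]
    {f : ℝ → E → E} {K r : ℝ≥0} {t₀ a M : ℝ} {x₀ : E}
    (hf : ∀ t, LipschitzWith K (f t))
    (hcont : ∀ x, ContinuousOn (f · x) (Icc (t₀ - a) (t₀ + a)))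
    (hM : ∀ t ∈ Icc (t₀ - a) (t₀ + a), ‖f t x₀‖ ≤ M)
    (ha : 0 ≤ a) (hMa : (M + K * r) * a ≤ r) :
    ∃ x : ℝ → E, x t₀ = x₀ ∧ ∀ t ∈ Icc (t₀ - a) (t₀ + a),
      HasDerivWithinAt x (f t (x t)) (Icc (t₀ - a) (t₀ + a)) t := by
  have ht₀ : t₀ ∈ Icc (t₀ - a) (t₀ + a) := ⟨by linarith, by linarith⟩
  have hM₀ : 0 ≤ M := (norm_nonneg _).trans (hM t₀ ht₀)
  have hnorm : ∀ t ∈ Icc (t₀ - a) (t₀ + a), ∀ x ∈ closedBall x₀ r,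
      ‖f t x‖ ≤ ((M.toNNReal + K * r : ℝ≥0) : ℝ) := by
    intro t ht x hx
    rw [NNReal.coe_add, Real.coe_toNNReal _ hM₀, NNReal.coe_mul]
    calc ‖f t x‖ ≤ ‖f t x₀‖ + ‖f t x - f t x₀‖ := norm_le_insert' _ _
      _ ≤ M + K * r := by
        gcongr
        · exact hM t ht
        · rw [← dist_eq_norm]
          exact (hf t).dist_le_mul_of_le (mem_closedBall.mp hx)
  have hpl : IsPicardLindelof f (⟨t₀, ht₀⟩ : Icc (t₀ - a) (t₀ + a)) x₀ r 0
      (M.toNNReal + K * r) K :=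
    { lipschitzOnWith := fun t _ => (hf t).lipschitzOnWith
      continuousOn := fun x _ => hcont x
      norm_le := hnorm
      mul_max_le := by
        simpa [Real.coe_toNNReal _ hM₀] using hMa }
  exact hpl.exists_eq_forall_mem_Icc_hasDerivWithinAt₀

theorem eqOn_Icc_of_hasDerivWithinAt_of_lipschitzWith
    {f : ℝ → E → E} {K : ℝ≥0} {a b t₀ : ℝ} {x y : ℝ → E}
    (hf : ∀ t, LipschitzWith K (f t)) (ht₀ : t₀ ∈ Icc a b)
    (hx : ∀ t ∈ Icc a b, HasDerivWithinAt x (f t (x t)) (Icc a b) t)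
    (hy : ∀ t ∈ Icc a b, HasDerivWithinAt y (f t (y t)) (Icc a b) t)
    (h : x t₀ = y t₀) :
    EqOn x y (Icc a b) := by
  have hxc : ContinuousOn x (Icc a b) := fun t ht => (hx t ht).continuousWithinAt
  have hyc : ContinuousOn y (Icc a b) := fun t ht => (hy t ht).continuousWithinAt
  have hleft : Icc a t₀ ⊆ Icc a b := Icc_subset_Icc_right ht₀.2
  have hright : Icc t₀ b ⊆ Icc a b := Icc_subset_Icc_left ht₀.1
  have hbackward : ∀ z : ℝ → E, (∀ t ∈ Icc a b, HasDerivWithinAt z (f t (z t)) (Icc a b) t) →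
      ∀ t ∈ Ioc a t₀, HasDerivWithinAt z (f t (z t)) (Iic t) t := fun z hz t ht =>
    (hz t (hleft (Ioc_subset_Icc_self ht))).mono_of_mem_nhdsWithin
      (Icc_mem_nhdsLE_of_mem ⟨ht.1, ht.2.trans ht₀.2⟩)
  have hforward : ∀ z : ℝ → E, (∀ t ∈ Icc a b, HasDerivWithinAt z (f t (z t)) (Icc a b) t) →
      ∀ t ∈ Ico t₀ b, HasDerivWithinAt z (f t (z t)) (Ici t) t := fun z hz t ht =>
    (hz t (hright (Ico_subset_Icc_self ht))).mono_of_mem_nhdsWithin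
      (Icc_mem_nhdsGE_of_mem ⟨ht₀.1.trans ht.1, ht.2⟩)
  rw [← Icc_union_Icc_eq_Icc ht₀.1 ht₀.2]
  refine EqOn.union ?_ ?_
  · exact ODE_solution_unique_of_mem_Icc_left (s := fun _ => univ)
      (fun t _ => (hf t).lipschitzOnWith) (hxc.mono hleft) (hbackward x hx) (fun _ _ => trivial)
      (hyc.mono hleft) (hbackward y hy) (fun _ _ => trivial) h
  · exact ODE_solution_unique hf (hxc.mono hright) (hforward x hx)
      (hyc.mono hright) (hforward y hy) h

variable {F : Type*} [NormedAddCommGroup F] [NormedSpace ℝ F]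

theorem HasDerivWithinAt.clm_apply_of_semiconj {f : E → E} {g : F → F} {x : ℝ → E}
    {s : Set ℝ} {t : ℝ} (A : E →L[ℝ] F) (hx : HasDerivWithinAt x (f (x t)) s t)
    (hA : Semiconj A f g) :
    HasDerivWithinAt (fun t => A (x t)) (g (A (x t))) s t :=
  hA (x t) ▸ A.hasFDerivAt.comp_hasDerivWithinAt t hx

end LipschitzODE

theorem existence_uniqueness_ode_projective_limit_general
    (E : ℕ → Type*) [∀ i, NormedAddCommGroup (E i)] [∀ i, NormedSpace ℝ (E i)]
    [∀ i, CompleteSpace (E i)]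
    (φ : ∀ i j : ℕ, i ≤ j → E j →L[ℝ] E i)
    (μ : NNReal)
    (f : ∀ i, ℝ → E i → E i)
    (hcont : ∀ i, Continuous (fun p : ℝ × E i => f i p.1 p.2))
    (hLip : ∀ i (t : ℝ), LipschitzWith μ (f i t))
    (hcompat : ∀ i j (hij : i ≤ j) (t : ℝ) (x : E j),
      φ i j hij (f j t x) = f i t (φ i j hij x))
    (t₀ : ℝ) (x₀ : ∀ i, E i) (hx₀ : ∀ i j (hij : i ≤ j), φ i j hij (x₀ j) = x₀ i)
    (τ : ℝ) (hτ : 0 < τ)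
    (M₁ : ℝ)
    (hM₁ : IsLUB {r : ℝ | ∃ i, ∃ t ∈ Icc (t₀ - τ) (t₀ + τ), r = ‖f i t (x₀ i)‖} M₁)
    (a : ℝ) (ha : a = min τ (1 / (M₁ + (μ : ℝ)))) :
    ∃ x : ∀ i, ℝ → E i,
      (∀ i, x i t₀ = x₀ i) ∧
      (∀ i, ∀ t ∈ Icc (t₀ - a) (t₀ + a),
        HasDerivWithinAt (x i) (f i t (x i t)) (Icc (t₀ - a) (t₀ + a)) t) ∧
      (∀ t ∈ Icc (t₀ - a) (t₀ + a), ∀ i j (hij : i ≤ j), φ i j hij (x j t) = x i t) ∧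
      (∀ z : ∀ i, ℝ → E i,
        (∀ i, z i t₀ = x₀ i) →
        (∀ i, ∀ t ∈ Icc (t₀ - a) (t₀ + a),
          HasDerivWithinAt (z i) (f i t (z i t)) (Icc (t₀ - a) (t₀ + a)) t) →
        ∀ i, ∀ t ∈ Icc (t₀ - a) (t₀ + a), z i t = x i t) := by
  have hbound : ∀ i, ∀ t ∈ Icc (t₀ - τ) (t₀ + τ), ‖f i t (x₀ i)‖ ≤ M₁ :=
    fun i t ht => hM₁.1 ⟨i, t, ht, rfl⟩
  have hM₁₀ : 0 ≤ M₁ := (norm_nonneg _).trans (hbound 0 t₀ ⟨by linarith, by linarith⟩)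
  have haτ : a ≤ τ := ha ▸ min_le_left _ _
  have ha₀ : 0 ≤ a := ha ▸ le_min hτ.le (by positivity)
  have hMa : (M₁ + μ) * a ≤ 1 := by
    rw [ha]
    calc (M₁ + μ) * min τ (1 / (M₁ + μ)) ≤ (M₁ + μ) * (M₁ + μ)⁻¹ := by
          gcongr
          exact (min_le_right _ _).trans_eq (one_div _)
      _ ≤ 1 := mul_inv_le_one
  have hIcc : Icc (t₀ - a) (t₀ + a) ⊆ Icc (t₀ - τ) (t₀ + τ) :=
    Icc_subset_Icc (by linarith) (by linarith)
  choose x hx₀' hx using fun i => exists_hasDerivWithinAt_Icc_of_lipschitzWith (r := 1)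
    (hLip i) (fun y => ((hcont i).comp (Continuous.prodMk_left y)).continuousOn)
    (fun t ht => hbound i t (hIcc ht)) ha₀ (by simpa using hMa)
  have ht₀ : t₀ ∈ Icc (t₀ - a) (t₀ + a) := ⟨by linarith, by linarith⟩
  refine ⟨x, hx₀', hx, fun t ht i j hij => ?_, fun z hz₀ hz i t ht => ?_⟩
  · refine eqOn_Icc_of_hasDerivWithinAt_of_lipschitzWith (hLip i) ht₀
      (fun s hs => (hx j s hs).clm_apply_of_semiconj (φ i j hij) (hcompat i j hij s)) (hx i)
      ?_ ht
    rw [hx₀' j, hx₀' i, hx₀ i j hij]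
  · exact eqOn_Icc_of_hasDerivWithinAt_of_lipschitzWith (hLip i) ht₀ (hz i) (hx i)
      (by rw [hz₀ i, hx₀' i]) ht

/-- Galanis–Palamides existence–uniqueness theorem for the ODE `x' = φ(t, x)` on a
projective limit of Banach spaces, stated componentwise: for a compatible family
of continuous, uniformly `μ`-Lipschitz (in the space variable) time-dependent
vector fields `f i`, an initial point `x₀` in the inverse limit, and
`M₁ = sup {‖f i t (x₀ i)‖ : i ∈ ℕ, t ∈ [t₀-τ, t₀+τ]} < ∞`, there is a unique
system of solutions on `[t₀-a, t₀+a]` with `a = min(τ, 1/(M₁+μ))`, and the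
solutions define a curve in the inverse limit. -/
theorem existence_uniqueness_ode_projective_limit
    (E : ℕ → Type*) [∀ i, NormedAddCommGroup (E i)] [∀ i, NormedSpace ℝ (E i)]
    [∀ i, CompleteSpace (E i)]
    (φ : ∀ i j : ℕ, i ≤ j → E j →L[ℝ] E i)
    (hφid : ∀ i (x : E i), φ i i le_rfl x = x)
    (hφcomp : ∀ i j k (hij : i ≤ j) (hjk : j ≤ k) (x : E k),
      φ i j hij (φ j k hjk x) = φ i k (hij.trans hjk) x)
    (μ : NNReal) (hμ : 0 < μ)
    (f : ∀ i, ℝ → E i → E i)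
    (hcont : ∀ i, Continuous (fun p : ℝ × E i => f i p.1 p.2))
    (hLip : ∀ i (t : ℝ), LipschitzWith μ (f i t))
    (hcompat : ∀ i j (hij : i ≤ j) (t : ℝ) (x : E j),
      φ i j hij (f j t x) = f i t (φ i j hij x))
    (t₀ : ℝ) (x₀ : ∀ i, E i) (hx₀ : ∀ i j (hij : i ≤ j), φ i j hij (x₀ j) = x₀ i)
    (τ : ℝ) (hτ : 0 < τ)
    (M₁ : ℝ)
    (hM₁ : IsLUB {r : ℝ | ∃ i, ∃ t ∈ Icc (t₀ - τ) (t₀ + τ), r = ‖f i t (x₀ i)‖} M₁)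
    (a : ℝ) (ha : a = min τ (1 / (M₁ + (μ : ℝ)))) :
    ∃ x : ∀ i, ℝ → E i,
      (∀ i, x i t₀ = x₀ i) ∧
      (∀ i, ∀ t ∈ Icc (t₀ - a) (t₀ + a),
        HasDerivWithinAt (x i) (f i t (x i t)) (Icc (t₀ - a) (t₀ + a)) t) ∧
      (∀ t ∈ Icc (t₀ - a) (t₀ + a), ∀ i j (hij : i ≤ j), φ i j hij (x j t) = x i t) ∧
      (∀ z : ∀ i, ℝ → E i,
        (∀ i, z i t₀ = x₀ i) →
        (∀ i, ∀ t ∈ Icc (t₀ - a) (t₀ + a),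
          HasDerivWithinAt (z i) (f i t (z i t)) (Icc (t₀ - a) (t₀ + a)) t) →
        ∀ i, ∀ t ∈ Icc (t₀ - a) (t₀ + a), z i t = x i t) :=
  existence_uniqueness_ode_projective_limit_general E φ μ f hcont hLip hcompat t₀ x₀ hx₀ τ hτ M₁ hM₁
    a ha
end
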